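/- Let S_Q be a subgroup of the n-qubit Pauli group and let S_{Q,I}, S_{C,I} be subgroups with ⟨S_{Q,I}, S_{C,I}⟩ contained in the normalizer N(S_Q). Suppose an error set E ⊆ G_n satisfies: for all E_m, E_p ∈ E, E_m†E_p ∈ ⟨S_{Q,I}, S_{C,I}⟩ ∪ (G_n − N(S_Q)). Then for any two distinct errors E_m, E_p in E, either (a) there exists g ∈ S_Q with [E_m†E_p, g] ≠ 0 (so they have distinguishable syndromes), or (b) E_m†E_p acts on each codeword |Ψ_i⟩ as multiplication by ±1, preserving the classical index i. -/

import Mathlib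

open Matrix BigOperators

noncomputable def Pz : Matrix (Fin 2) (Fin 2) ℂ := !![1, 0; 0, -1]
noncomputable def Px : Matrix (Fin 2) (Fin 2) ℂ := !![0, 1; 1, 0]

noncomputable def PauliN {n : ℕ} (z x : Fin n → ZMod 2) :
    Matrix (Fin n → Fin 2) (Fin n → Fin 2) ℂ :=
  fun i j => ∏ r, (Pz ^ (z r).val * Px ^ (x r).val) (i r) (j r)

/-- The n-fold Pauli group 𝒢ₙ: the group generated by the Pauli operators N_{(z|x)}
together with the phases i^k, inside the group of invertible matrices. -/
noncomputable def PauliGroup (n : ℕ) :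
    Subgroup (Matrix (Fin n → Fin 2) (Fin n → Fin 2) ℂ)ˣ :=
  Subgroup.closure {P | ∃ (k : ℕ) (z x : Fin n → ZMod 2),
    (P : Matrix (Fin n → Fin 2) (Fin n → Fin 2) ℂ) = (Complex.I ^ k) • PauliN z x}

theorem Subgroup.exists_mul_ne_mul_of_notMem_normalizer {G : Type*} [Group G] {s : Set G} {x : G}
    (hx : x ∉ Subgroup.normalizer s) : ∃ g ∈ s, x * g ≠ g * x := by
  by_contra! hcomm
  exact hx <| Subgroup.centralizer_le_normalizer s <|
    Subgroup.mem_centralizer_iff.2 fun g hg => (hcomm g hg).symm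

theorem eacq_error_correcting_conditions_general {n : ℕ} {ι : Type*}
    (SQ SQI SCI : Subgroup (Matrix (Fin n → Fin 2) (Fin n → Fin 2) ℂ)ˣ)
    (Ψ : ι → ((Fin n → Fin 2) → ℂ))
    (hsign : ∀ g ∈ (SQI ⊔ SCI : Subgroup _), ∀ i,
      ((g : (Matrix (Fin n → Fin 2) (Fin n → Fin 2) ℂ)ˣ) :
        Matrix (Fin n → Fin 2) (Fin n → Fin 2) ℂ).mulVec (Ψ i) = Ψ i ∨
      ((g : (Matrix (Fin n → Fin 2) (Fin n → Fin 2) ℂ)ˣ) :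
        Matrix (Fin n → Fin 2) (Fin n → Fin 2) ℂ).mulVec (Ψ i) = -Ψ i)
    (E : Set (Matrix (Fin n → Fin 2) (Fin n → Fin 2) ℂ)ˣ)
    (hE : ∀ Em ∈ E, ∀ Ep ∈ E,
      Em⁻¹ * Ep ∈ ((SQI ⊔ SCI : Subgroup _) : Set _) ∪
        ((PauliGroup n : Set _) \ ((Subgroup.normalizer (SQ : Set _) ⊓ PauliGroup n : Subgroup _) : Set _))) :
    ∀ Em ∈ E, ∀ Ep ∈ E, Em ≠ Ep →
      (∃ g ∈ SQ, (Em⁻¹ * Ep) * g ≠ g * (Em⁻¹ * Ep)) ∨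
      (∀ i, (((Em⁻¹ * Ep : (Matrix (Fin n → Fin 2) (Fin n → Fin 2) ℂ)ˣ)) :
          Matrix (Fin n → Fin 2) (Fin n → Fin 2) ℂ).mulVec (Ψ i) = Ψ i ∨
        (((Em⁻¹ * Ep : (Matrix (Fin n → Fin 2) (Fin n → Fin 2) ℂ)ˣ)) :
          Matrix (Fin n → Fin 2) (Fin n → Fin 2) ℂ).mulVec (Ψ i) = -Ψ i) := by
  intro Em hEm Ep hEp _
  rcases hE Em hEm Ep hEp with hsignGroup | ⟨hPauli, hnotNormalizer⟩
  · exact .inr (hsign _ hsignGroup)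
  · refine .inl (Subgroup.exists_mul_ne_mul_of_notMem_normalizer fun hN => ?_)
    exact hnotNormalizer ⟨hN, hPauli⟩

/-- Theorem 2 (error-correcting conditions): if every E_m†E_p lies in
⟨S_{Q,I},S_{C,I}⟩ ∪ (𝒢ₙ − N(S_Q)), then any two distinct errors either have an
element of S_Q witnessing distinguishable syndromes (noncommutation), or
E_m†E_p acts on every codeword |Ψ_i⟩ as multiplication by ±1, preserving the
classical index. -/
theorem eacq_error_correcting_conditions {n : ℕ} {ι : Type*}
    (SQ SQI SCI : Subgroup (Matrix (Fin n → Fin 2) (Fin n → Fin 2) ℂ)ˣ)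
    (hSQ : SQ ≤ PauliGroup n) (hSQI : SQI ≤ SQ)
    (hnorm : (SQI ⊔ SCI : Subgroup _) ≤ Subgroup.normalizer (SQ : Set _))
    (Ψ : ι → ((Fin n → Fin 2) → ℂ))
    (hstab : ∀ g ∈ SQ, ∀ i,
      ((g : (Matrix (Fin n → Fin 2) (Fin n → Fin 2) ℂ)ˣ) :
        Matrix (Fin n → Fin 2) (Fin n → Fin 2) ℂ).mulVec (Ψ i) = Ψ i)
    (hsign : ∀ g ∈ (SQI ⊔ SCI : Subgroup _), ∀ i,
      ((g : (Matrix (Fin n → Fin 2) (Fin n → Fin 2) ℂ)ˣ) :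
        Matrix (Fin n → Fin 2) (Fin n → Fin 2) ℂ).mulVec (Ψ i) = Ψ i ∨
      ((g : (Matrix (Fin n → Fin 2) (Fin n → Fin 2) ℂ)ˣ) :
        Matrix (Fin n → Fin 2) (Fin n → Fin 2) ℂ).mulVec (Ψ i) = -Ψ i)
    (E : Set (Matrix (Fin n → Fin 2) (Fin n → Fin 2) ℂ)ˣ)
    (hEG : E ⊆ (PauliGroup n : Set _))
    (hE : ∀ Em ∈ E, ∀ Ep ∈ E,
      Em⁻¹ * Ep ∈ ((SQI ⊔ SCI : Subgroup _) : Set _) ∪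
        ((PauliGroup n : Set _) \ ((Subgroup.normalizer (SQ : Set _) ⊓ PauliGroup n : Subgroup _) : Set _))) :
    ∀ Em ∈ E, ∀ Ep ∈ E, Em ≠ Ep →
      (∃ g ∈ SQ, (Em⁻¹ * Ep) * g ≠ g * (Em⁻¹ * Ep)) ∨
      (∀ i, (((Em⁻¹ * Ep : (Matrix (Fin n → Fin 2) (Fin n → Fin 2) ℂ)ˣ)) :
          Matrix (Fin n → Fin 2) (Fin n → Fin 2) ℂ).mulVec (Ψ i) = Ψ i ∨
        (((Em⁻¹ * Ep : (Matrix (Fin n → Fin 2) (Fin n → Fin 2) ℂ)ˣ)) :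
          Matrix (Fin n → Fin 2) (Fin n → Fin 2) ℂ).mulVec (Ψ i) = -Ψ i) :=
  eacq_error_correcting_conditions_general SQ SQI SCI Ψ hsign E hE
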